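/- arXiv:2605.06253 — 6 statements merged into one kernel-verified Lean document; each statement's English description precedes it below -/
import Mathlib

section
/- Let n ≥ 1 and m ≥ 2n+2 be integers. If G is a simple graph on m+1 vertices such that G contains no subgraph isomorphic to K_{2,n} and the complement of G contains no cycle of length m, then the complement of G is 2-connected. -/
/-- `G` contains a subgraph isomorphic to `H` (not necessarily induced),
i.e. there is an injective graph homomorphism from `H` to `G`. -/
def Contains {V W : Type*} (G : SimpleGraph V) (H : SimpleGraph W) : Prop :=
  ∃ f : H →g G, Function.Injective f

/-- `G` contains a cycle of length `k`. -/
def HasCycleLength {V : Type*} (G : SimpleGraph V) (k : ℕ) : Prop :=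
  ∃ (v : V) (c : G.Walk v v), c.IsCycle ∧ c.length = k

/-- `G` is 2-connected: it has at least 3 vertices and deleting any single
vertex leaves a connected graph. -/
def TwoConnected {V : Type*} [Fintype V] (G : SimpleGraph V) : Prop :=
  3 ≤ Fintype.card V ∧ ∀ v : V, (G.induce ({v}ᶜ : Set V)).Connected

/-!
If deleting a vertex `v` disconnects `Gᶜ`, the other `m` vertices split into two nonempty parts
with every pair across the parts adjacent in `G`. If both parts have at least two vertices, the
larger one has at least `n` (as `m ≥ 2n + 2`), which gives a `K_{2,n}` in `G`. Otherwise one part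
is a single vertex `s`, adjacent in `G` to everything except `v`. Then every `G`-neighbour of a
vertex `w ≠ s` other than `s` and `v` is a common neighbour of `s` and `w`, so `K_{2,n}`-freeness
leaves `w` with at most `n` `G`-neighbours in `V ∖ {s}`. Thus `Gᶜ` restricted to these `m`
vertices has minimum degree at least `m - n - 1 ≥ m / 2`, and Dirac's theorem (via a longest
path and two crossing chords from its ends) gives a cycle of length `m` in `Gᶜ`.
-/

open Finset SimpleGraph

namespace SimpleGraph

variable {V : Type*} {G : SimpleGraph V}

namespace Walk

variable {u v : V}

lemma exists_getVert_succ_eq_of_ne_start {p : G.Walk u v} {w : V} (hw : w ∈ p.support)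
    (hwu : w ≠ u) : ∃ i < p.length, p.getVert (i + 1) = w := by
  obtain ⟨j, rfl, hj⟩ := mem_support_iff_exists_getVert.mp hw
  obtain ⟨i, rfl⟩ : ∃ i, j = i + 1 :=
    Nat.exists_eq_succ_of_ne_zero (by rintro rfl; simp at hwu)
  exact ⟨i, by omega, rfl⟩

lemma exists_getVert_eq_of_ne_end {p : G.Walk u v} {w : V} (hw : w ∈ p.support)
    (hwv : w ≠ v) : ∃ i < p.length, p.getVert i = w := by
  obtain ⟨j, rfl, hj⟩ := mem_support_iff_exists_getVert.mp hw
  refine ⟨j, lt_of_le_of_ne hj ?_, rfl⟩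
  rintro rfl
  simp at hwv

section Degree

variable [Fintype V] [DecidableRel G.Adj]

lemma degree_le_card_filter_adj_getVert (p : G.Walk u v) (a : V) (d : ℕ)
    (h : ∀ w, G.Adj a w → ∃ i < p.length, p.getVert (i + d) = w) :
    G.degree a ≤ #{i ∈ range p.length | G.Adj a (p.getVert (i + d))} := by
  classical
  rw [← card_neighborFinset_eq_degree]
  refine (card_le_card fun w hw => ?_).trans (card_image_le (f := fun i => p.getVert (i + d)))
  obtain ⟨i, hi, rfl⟩ := h w ((mem_neighborFinset _ _ _).mp hw)
  exact mem_image.mpr ⟨i, by simpa [hi] using hw, rfl⟩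

lemma exists_adj_getVert_succ_and_adj_getVert (p : G.Walk u v)
    (hu : ∀ w, G.Adj u w → w ∈ p.support) (hv : ∀ w, G.Adj v w → w ∈ p.support)
    (h : p.length < G.degree u + G.degree v) :
    ∃ i < p.length, G.Adj u (p.getVert (i + 1)) ∧ G.Adj (p.getVert i) v := by
  have hA := p.degree_le_card_filter_adj_getVert u 1 fun w hw =>
    exists_getVert_succ_eq_of_ne_start (hu w hw) hw.ne'
  have hB := p.degree_le_card_filter_adj_getVert v 0 fun w hw =>
    exists_getVert_eq_of_ne_end (hv w hw) hw.ne'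
  simp only [add_zero] at hB
  obtain ⟨i, hi⟩ := inter_nonempty_of_card_lt_card_add_card
    (filter_subset (fun i => G.Adj u (p.getVert (i + 1))) (range p.length))
    (filter_subset (fun i => G.Adj v (p.getVert i)) _) (by rw [card_range]; omega)
  simp only [mem_inter, mem_filter, mem_range] at hi
  exact ⟨i, hi.1.1, hi.1.2, hi.2.2.symm⟩

lemma IsPath.exists_adj_mem_support {p : G.Walk u v} (hp : p.IsPath) {z : V}
    (hz : z ∉ p.support) (h : Fintype.card V < p.length + 2 + G.degree z) :
    ∃ y ∈ p.support, G.Adj z y := by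
  classical
  by_contra! hzp
  have : G.neighborFinset z ⊆ (insert z p.support.toFinset)ᶜ := fun y hy => by
    rw [mem_neighborFinset] at hy
    simpa [hy.ne'] using fun hyp => hzp y hyp hy
  have hdeg := card_le_card this
  have hcard := card_add_card_compl (insert z p.support.toFinset)
  rw [card_neighborFinset_eq_degree] at hdeg
  rw [card_insert_of_notMem (by simpa using hz), List.toFinset_card_of_nodup hp.support_nodup,
    length_support] at hcard
  omega

end Degree

/-- The cycle `u → … → pᵢ → v → … → pᵢ₊₁ → u`. -/
lemma IsPath.exists_isCycle_of_adj_getVert {p : G.Walk u v} (hp : p.IsPath) {i : ℕ}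
    (hi : i < p.length) (h2 : 2 ≤ p.length) (hu : G.Adj u (p.getVert (i + 1)))
    (hv : G.Adj (p.getVert i) v) :
    ∃ (x : V) (c : G.Walk x x), c.IsCycle ∧ c.length = p.length + 1 ∧
      ∀ w, w ∈ c.support ↔ w ∈ p.support := by
  set q := (p.take i).append (cons hv (p.drop (i + 1)).reverse)
  have hq_support : q.support.Perm p.support := by
    have : q.support = p.support.take (i + 1) ++ (p.support.drop (i + 1)).reverse := by
      simp [q, support_append, support_take, Nat.min_eq_left (show i + 1 ≤ p.length by omega)]
    rw [this]
    exact ((List.reverse_perm _).append_left _).trans (.of_eq (List.take_append_drop _ _))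
  have hq : q.IsPath := isPath_def _ |>.mpr (hq_support.nodup_iff.mpr hp.support_nodup)
  have hq_length : q.length = p.length := by
    simpa [length_support] using hq_support.length_eq
  have hu_q : u ∉ q.support.tail := by
    have := hq.support_nodup
    rw [← cons_tail_support] at this
    exact (List.nodup_cons.mp this).1
  refine ⟨u, q.append (cons hu.symm Walk.nil), ?_, by simp [hq_length], fun w => ?_⟩
  · exact hq.isCycle_append (by simpa using hu.ne.symm) (by simpa using hu_q) (by omega)
  · simp only [support_append, support_cons, support_nil, List.tail_cons, List.mem_append,
      List.mem_singleton, ← hq_support.mem_iff]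
    exact ⟨fun h => h.elim id fun h => h ▸ q.start_mem_support, Or.inl⟩

lemma IsCycle.exists_isPath_length_eq_of_adj [DecidableEq V] {c : G.Walk u u} (hc : c.IsCycle)
    {y z : V} (hy : y ∈ c.support) (hz : z ∉ c.support) (hzy : G.Adj z y) :
    ∃ (w : V) (q : G.Walk z w), q.IsPath ∧ q.length = c.length := by
  set c' := c.rotate y hy
  have hc' : c'.IsCycle := hc.rotate hy
  have hz' : z ∉ c'.tail.reverse.support := by
    rw [support_reverse, List.mem_reverse]
    refine fun h => hz ((mem_support_rotate_iff c y hy).mp ?_)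
    rw [← cons_support_tail hc'.not_nil]
    exact List.mem_cons_of_mem _ h
  refine ⟨_, cons hzy c'.tail.reverse, hc'.isPath_tail.reverse.cons hz', ?_⟩
  have := length_tail_add_one hc'.not_nil
  simp [c'] at this ⊢
  omega

def IsLongestPath (p : G.Walk u v) : Prop :=
  p.IsPath ∧ ∀ (a b : V) (q : G.Walk a b), q.IsPath → q.length ≤ p.length

lemma IsLongestPath.reverse {p : G.Walk u v} (hp : p.IsLongestPath) : p.reverse.IsLongestPath :=
  ⟨hp.1.reverse, by simpa using hp.2⟩

lemma IsLongestPath.mem_support_of_adj {p : G.Walk u v} (hp : p.IsLongestPath) {w : V}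
    (hw : G.Adj u w) : w ∈ p.support := by
  by_contra h
  simpa using hp.2 _ _ _ (hp.1.cons h (h := hw.symm))

end Walk

lemma exists_isLongestPath [Finite V] [Nonempty V] :
    ∃ (u v : V) (p : G.Walk u v), p.IsLongestPath := by
  classical
  have := Fintype.ofFinite V
  let w := Classical.arbitrary V
  have : Nonempty (Σ u v : V, G.Path u v) := ⟨⟨w, w, Path.nil⟩⟩
  obtain ⟨⟨u, v, p⟩, hp⟩ :=
    Finite.exists_max fun q : Σ u v : V, G.Path u v => q.2.2.1.length
  exact ⟨u, v, p, p.2, fun a b q hq => hp ⟨a, b, q, hq⟩⟩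

theorem isHamiltonian_of_card_le_two_mul_minDegree [Fintype V] [DecidableEq V]
    [DecidableRel G.Adj] (h3 : 3 ≤ Fintype.card V) (hδ : Fintype.card V ≤ 2 * G.minDegree) :
    G.IsHamiltonian := by
  intro _
  have : Nonempty V := Fintype.card_pos_iff.mp (by omega)
  obtain ⟨u, v, p, hp⟩ := G.exists_isLongestPath
  have hu : ∀ w, G.Adj u w → w ∈ p.support := fun w => hp.mem_support_of_adj
  have hv : ∀ w, G.Adj v w → w ∈ p.support := fun w hw => by
    simpa using hp.reverse.mem_support_of_adj hw
  have hδu := G.minDegree_le_degree u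
  have hδv := G.minDegree_le_degree v
  have hu_length : G.degree u ≤ p.length :=
    (p.degree_le_card_filter_adj_getVert u 1 fun w hw =>
      Walk.exists_getVert_succ_eq_of_ne_start (hu w hw) hw.ne').trans
      ((card_filter_le _ _).trans (card_range _).le)
  have hp_length : p.length < Fintype.card V := hp.1.length_lt
  obtain ⟨i, hi, hui, hiv⟩ := p.exists_adj_getVert_succ_and_adj_getVert hu hv (by omega)
  obtain ⟨x, c, hc, hc_length, hc_support⟩ :=
    hp.1.exists_isCycle_of_adj_getVert hi (by omega) hui hiv
  refine ⟨x, c, Walk.isHamiltonianCycle_iff_isCycle_and_length_eq.mpr ⟨hc, ?_⟩⟩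
  by_contra hne
  obtain ⟨z, hz⟩ : ∃ z, z ∉ p.support := by
    by_contra! h
    have := (hp.1.isHamiltonian_of_mem h).length_eq
    omega
  have hδz := G.minDegree_le_degree z
  obtain ⟨y, hy, hzy⟩ := hp.1.exists_adj_mem_support hz (by omega)
  obtain ⟨w, q, hq, hq_length⟩ :=
    hc.exists_isPath_length_eq_of_adj ((hc_support y).mpr hy) (mt (hc_support z).mp hz) hzy
  have := hp.2 _ _ q hq
  omega

section Containment

variable {W : Type*}

lemma contains_iff_isContained {H : SimpleGraph W} : Contains G H ↔ H ⊑ G :=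
  ⟨fun ⟨f, hf⟩ => ⟨⟨f, hf⟩⟩, fun ⟨f⟩ => ⟨f.toHom, f.injective⟩⟩

lemma contains_completeBipartiteGraph_of_isCompleteBetween {a b : ℕ} {A B : Finset V}
    (hA : a ≤ #A) (hB : b ≤ #B) (h : G.IsCompleteBetween A B) :
    Contains G (completeBipartiteGraph (Fin a) (Fin b)) := by
  obtain ⟨A', hA', rfl⟩ := exists_subset_card_eq hA
  obtain ⟨B', hB', rfl⟩ := exists_subset_card_eq hB
  rw [contains_iff_isContained, completeBipartiteGraph_isContained_iff]
  exact ⟨A', B', by simp, by simp, fun x hx y hy => h (hA' hx) (hB' hy)⟩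

lemma card_inter_neighborFinset_lt [Fintype V] [DecidableRel G.Adj] [DecidableEq V] {n : ℕ}
    (hG : ¬ Contains G (completeBipartiteGraph (Fin 2) (Fin n))) {s w : V} (hsw : s ≠ w) :
    #(G.neighborFinset s ∩ G.neighborFinset w) < n := by
  by_contra! h
  refine hG (contains_completeBipartiteGraph_of_isCompleteBetween (A := {s, w})
    (card_pair hsw).ge h fun x hx y hy => ?_)
  simp only [coe_insert, coe_singleton, Set.mem_insert_iff, Set.mem_singleton_iff, coe_inter,
    Set.mem_inter_iff, mem_coe, mem_neighborFinset] at hx hy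
  rcases hx with rfl | rfl
  exacts [hy.1, hy.2]

end Containment

lemma induce_compl (s : Set V) : Gᶜ.induce s = (G.induce s)ᶜ := by
  ext x y
  simp [Subtype.ext_iff]

lemma exists_isCompleteBetween_compl_of_not_preconnected_compl (h : ¬ Gᶜ.Preconnected) :
    ∃ s : Set V, s.Nonempty ∧ sᶜ.Nonempty ∧ G.IsCompleteBetween s sᶜ := by
  obtain ⟨a, b, hab⟩ : ∃ a b, ¬ Gᶜ.Reachable a b := by simpa [Preconnected] using h
  refine ⟨{x | Gᶜ.Reachable a x}, ⟨a, .rfl⟩, ⟨b, hab⟩, fun x hx y hy => ?_⟩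
  simpa using (Gᶜ.reachable_or_compl_adj x y).resolve_left fun hxy => hy (hx.trans hxy)

lemma contains_or_exists_isUniversal_of_isCompleteBetween_compl [Fintype V] [DecidableEq V]
    {n : ℕ} (hV : 2 * n + 2 ≤ Fintype.card V) (S : Finset V) (hS : S.Nonempty)
    (hSc : Sᶜ.Nonempty) (h : G.IsCompleteBetween S ↑Sᶜ) :
    Contains G (completeBipartiteGraph (Fin 2) (Fin n)) ∨ ∃ s, G.IsUniversal s := by
  wlog hle : #S ≤ #Sᶜ generalizing S
  · exact this Sᶜ hSc (by simpa using hS) (by simpa using h.symm)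
      (by simp only [compl_compl]; omega)
  have hsum := card_add_card_compl S
  rcases (Nat.one_le_iff_ne_zero.mpr hS.card_ne_zero).eq_or_lt with h1 | h2
  · obtain ⟨s, rfl⟩ := card_eq_one.mp h1.symm
    exact .inr ⟨s, fun y hsy => h (by simp) (by simpa using hsy.symm)⟩
  · exact .inl (contains_completeBipartiteGraph_of_isCompleteBetween h2 (by omega) h)

lemma contains_or_exists_isUniversal_of_not_connected_compl [Fintype V] {n : ℕ}
    (hV : 2 * n + 2 ≤ Fintype.card V) (h : ¬ Gᶜ.Connected) :
    Contains G (completeBipartiteGraph (Fin 2) (Fin n)) ∨ ∃ s, G.IsUniversal s := by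
  classical
  have : Nonempty V := Fintype.card_pos_iff.mp (by omega)
  obtain ⟨s, ⟨a, ha⟩, ⟨b, hb⟩, hs⟩ :=
    exists_isCompleteBetween_compl_of_not_preconnected_compl fun h' => h ⟨h'⟩
  exact contains_or_exists_isUniversal_of_isCompleteBetween_compl hV s.toFinset
    ⟨a, by simpa using ha⟩ ⟨b, by simpa using hb⟩ (by simpa using hs)

lemma hasCycleLength_compl_of_forall_adj [Fintype V] {n m : ℕ} (hn : 1 ≤ n)
    (hm : 2 * n + 2 ≤ m) (hV : Fintype.card V = m + 1)
    (hG : ¬ Contains G (completeBipartiteGraph (Fin 2) (Fin n))) {s v : V}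
    (hs : ∀ y, y ≠ v → s ≠ y → G.Adj s y) : HasCycleLength Gᶜ m := by
  classical
  set S : Set V := {s}ᶜ
  have hS : Fintype.card S = m := by rw [Fintype.card_compl_set]; simp [hV]
  have hdeg : ∀ w : S, (G.induce S).degree w ≤ n := by
    intro w
    have hsw : s ≠ w := fun h => w.2 h.symm
    have : ((G.induce S).neighborFinset w).map (Function.Embedding.subtype _) ⊆
        insert v (G.neighborFinset s ∩ G.neighborFinset w) := by
      intro y hy
      obtain ⟨hwy, hyS⟩ : G.Adj w y ∧ y ∈ S := by simpa using hy
      rw [mem_insert, mem_inter, mem_neighborFinset, mem_neighborFinset]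
      by_cases hyv : y = v
      · exact .inl hyv
      · exact .inr ⟨hs y hyv fun h => hyS h.symm, hwy⟩
    calc (G.induce S).degree w
        = #(((G.induce S).neighborFinset w).map (Function.Embedding.subtype _)) := by
          rw [card_map, card_neighborFinset_eq_degree]
      _ ≤ #(G.neighborFinset s ∩ G.neighborFinset w) + 1 :=
          (card_le_card this).trans (card_insert_le _ _)
      _ ≤ n := card_inter_neighborFinset_lt hG hsw
  have : Nonempty S := Fintype.card_pos_iff.mp (by omega)
  have hmin : m - n - 1 ≤ (Gᶜ.induce S).minDegree := by
    refine le_minDegree_of_forall_le_degree _ _ fun w => ?_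
    have hcompl : (Gᶜ.induce S).degree w = Fintype.card S - 1 - (G.induce S).degree w := by
      convert (G.induce S).degree_compl w using 2
      exact induce_compl S
    have := hdeg w
    omega
  obtain ⟨x, c, hc⟩ :=
    isHamiltonian_of_card_le_two_mul_minDegree (G := Gᶜ.induce S) (by omega) (by omega) (by omega)
  let ι := Embedding.induce (G := Gᶜ) S
  exact ⟨x, c.map ι.toHom, (Walk.isCycle_map_iff_of_injective ι.injective).mpr hc.isCycle,
    (Walk.length_map _ _).trans (by rw [hc.length_eq, hS])⟩

end SimpleGraph

/-- If `m ≥ 2n + 2`, `G` is a graph on `m + 1` vertices with no `K_{2,n}`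
subgraph and `Gᶜ` has no cycle of length `m`, then `Gᶜ` is 2-connected. -/
theorem compl_two_connected (n m : ℕ) (hn : 1 ≤ n) (hm : 2 * n + 2 ≤ m)
    (V : Type) [Fintype V] (hV : Fintype.card V = m + 1) (G : SimpleGraph V)
    (hfree : ¬ Contains G (completeBipartiteGraph (Fin 2) (Fin n)))
    (hcyc : ¬ HasCycleLength Gᶜ m) :
    TwoConnected Gᶜ := by
  classical
  refine ⟨by omega, fun v => ?_⟩
  by_contra hdisc
  rw [induce_compl] at hdisc
  have hW : Fintype.card ({v}ᶜ : Set V) = m := by rw [Fintype.card_compl_set]; simp [hV]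
  rcases contains_or_exists_isUniversal_of_not_connected_compl (n := n) (by omega) hdisc with
    hK | ⟨⟨s, hsv⟩, hs⟩
  · exact hfree (contains_iff_isContained.mpr
      ((contains_iff_isContained.mp hK).trans ⟨Copy.induce G _⟩))
  · exact hcyc (hasCycleLength_compl_of_forall_adj hn hm hV hfree
      fun y hyv hsy => hs (w := ⟨y, hyv⟩) (Subtype.coe_ne_coe.mp hsy))
end

section
/- Let G be a simple graph and let C = v_1 v_2 ⋯ v_l v_1 be a cycle of maximum length l in G (indices taken modulo l). Let x and y be two distinct vertices of G not lying on C, and suppose x is adjacent in G to v_i and v_j with i ≠ j (mod l). Then y is not adjacent in G to both v_{i+1} and v_{j+1}, and y is not adjacent in G to both v_{i-1} and v_{j-1}. -/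
/-!
If `y` were adjacent to `v_{i+1}` and `v_{j+1}`, then `x v_i v_{i-1} ⋯ v_{j+1} y v_{i+1} ⋯ v_j x`
would be a cycle of length `l + 2`, contradicting maximality; the claim about `v_{i-1}, v_{j-1}`
is the same statement for `C` traversed backwards.
-/

open SimpleGraph Function

section

variable {V : Type*} {G : SimpleGraph V}

theorem hasCycleLength_of_injOn {n : ℕ} (hn : 3 ≤ n) (w : ℕ → V)
    (hw : Set.InjOn w (Set.Iio n))
    (hadj : ∀ t < n, G.Adj (w t) (w ((t + 1) % n))) : HasCycleLength G n := by
  obtain ⟨m, rfl⟩ : ∃ m, n = m + 3 := ⟨n - 3, by omega⟩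
  have hsucc : ∀ a : Fin (m + 3), G.Adj (w a) (w ↑(a + 1)) := fun a => by
    simpa [Fin.val_add] using hadj a a.isLt
  refine (cycleGraph_isContained_iff (by omega)).mp
    ⟨⟨⟨fun a => w a, fun {a b} hab => ?_⟩, fun a b h => Fin.ext (hw a.isLt b.isLt h)⟩⟩
  rcases cycleGraph_adj.mp hab with h | h
  · rw [sub_eq_iff_eq_add'] at h
    exact h ▸ (hsucc b).symm
  · rw [sub_eq_iff_eq_add'] at h
    exact h ▸ hsucc a

theorem hasCycleLength_add_two_of_path {l d : ℕ} (hd : 0 < d) (hdl : d < l) (u : ℕ → V)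
    (hu : Set.InjOn u (Set.Iio l)) (hadj : ∀ m, m + 1 < l → G.Adj (u m) (u (m + 1)))
    {x y : V} (hxy : x ≠ y) (hx : ∀ m < l, x ≠ u m) (hy : ∀ m < l, y ≠ u m)
    (hx₁ : G.Adj x (u (d - 1))) (hx₂ : G.Adj x (u (l - 1)))
    (hy₁ : G.Adj y (u d)) (hy₂ : G.Adj y (u 0)) : HasCycleLength G (l + 2) := by
  -- the cycle `u 0, …, u (d - 1), x, u (l - 1), …, u d, y`
  set w : ℕ → V := fun t =>
    if t < d then u t else if t = d then x else if t ≤ l then u (l + d - t) else y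
  have w_lt : ∀ t < d, w t = u t := fun t ht => if_pos ht
  have w_d : w d = x := by simp [w]
  have w_mid : ∀ t, d < t → t ≤ l → w t = u (l + d - t) := fun t h₁ h₂ => by
    simp [w, h₂, show ¬ t < d by omega, show t ≠ d by omega]
  have w_top : w (l + 1) = y := by
    simp [w, show ¬ l + 1 < d by omega, show l + 1 ≠ d by omega]
  refine hasCycleLength_of_injOn (by omega) w ?_ fun t ht => ?_
  · intro s hs t ht h
    simp only [Set.mem_Iio] at hs ht
    simp only [w] at h
    split_ifs at h <;> first
      | omega
      | (have := hu (Set.mem_Iio.mpr (by omega)) (Set.mem_Iio.mpr (by omega)) h; omega)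
      | exact absurd h (hx _ (by omega))
      | exact absurd h.symm (hx _ (by omega))
      | exact absurd h (hy _ (by omega))
      | exact absurd h.symm (hy _ (by omega))
      | exact absurd h hxy
      | exact absurd h.symm hxy
  · rcases (by omega :
        t + 1 < d ∨ t + 1 = d ∨ t = d ∨ (d < t ∧ t < l) ∨ t = l ∨ t = l + 1)
      with h | h | rfl | h | rfl | rfl
    · rw [Nat.mod_eq_of_lt (by omega), w_lt t (by omega), w_lt (t + 1) h]
      exact hadj t (by omega)
    · rw [Nat.mod_eq_of_lt (by omega), w_lt t (by omega), h, w_d, show t = d - 1 by omega]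
      exact hx₁.symm
    · rw [Nat.mod_eq_of_lt (by omega), w_d, w_mid _ (by omega) (by omega),
        show l + t - (t + 1) = l - 1 by omega]
      exact hx₂
    · rw [Nat.mod_eq_of_lt (by omega), w_mid t h.1 h.2.le, w_mid (t + 1) (by omega) (by omega),
        show l + d - t = l + d - (t + 1) + 1 by omega]
      exact (hadj _ (by omega)).symm
    · rw [Nat.mod_eq_of_lt (by omega), w_mid t hdl le_rfl, w_top, show t + d - t = d by omega]
      exact hy₁.symm
    · rw [Nat.mod_self, w_top, w_lt 0 hd]
      exact hy₂

theorem hasCycleLength_add_two_of_adj_succ {l : ℕ} [NeZero l] {v : ZMod l → V}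
    (hinj : Injective v) (hC : ∀ i, G.Adj (v i) (v (i + 1))) {x y : V} (hxy : x ≠ y)
    (hx : ∀ i, x ≠ v i) (hy : ∀ i, y ≠ v i) {i j : ZMod l} (hij : i ≠ j)
    (hxi : G.Adj x (v i)) (hxj : G.Adj x (v j))
    (hyi : G.Adj y (v (i + 1))) (hyj : G.Adj y (v (j + 1))) : HasCycleLength G (l + 2) := by
  set d := (j - i).val
  have hd_cast : (d : ZMod l) = j - i := ZMod.natCast_zmod_val _
  have hd : 0 < d :=
    Nat.pos_of_ne_zero fun h => hij (sub_eq_zero.mp ((ZMod.val_eq_zero _).mp h)).symm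
  refine hasCycleLength_add_two_of_path (u := fun m => v (i + 1 + m)) hd (ZMod.val_lt _)
    ?_ (fun m _ => ?_) hxy (fun _ _ => hx _) (fun _ _ => hy _) ?_ ?_ ?_ ?_
  · intro a ha b hb h
    have := (ZMod.natCast_eq_natCast_iff' a b l).mp (add_left_cancel (hinj h))
    rwa [Nat.mod_eq_of_lt ha, Nat.mod_eq_of_lt hb] at this
  · simpa [add_assoc] using hC (i + 1 + m)
  · convert hxj using 2
    rw [Nat.cast_pred hd, hd_cast]
    ring
  · convert hxi using 2
    rw [Nat.cast_pred (NeZero.pos l), ZMod.natCast_self]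
    ring
  · convert hyj using 2
    rw [hd_cast]
    ring
  · simpa using hyi

end

/-- If `C = v_1 v_2 ⋯ v_l v_1` is a cycle of maximum length in `G`, `x, y` are
distinct vertices off `C`, and `x` is adjacent to `v_i` and `v_j` with `i ≠ j`,
then `y` is not adjacent to both `v_{i+1}` and `v_{j+1}`, nor to both `v_{i-1}`
and `v_{j-1}`. -/
theorem shifted_neighbors_off_longest_cycle {V : Type*} (G : SimpleGraph V)
    (l : ℕ) (hl : 3 ≤ l) (v : ZMod l → V) (hinj : Function.Injective v)
    (hC : ∀ i : ZMod l, G.Adj (v i) (v (i + 1)))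
    (hmax : ∀ k : ℕ, HasCycleLength G k → k ≤ l)
    (x y : V) (hxy : x ≠ y)
    (hx : ∀ i : ZMod l, x ≠ v i) (hy : ∀ i : ZMod l, y ≠ v i)
    (i j : ZMod l) (hij : i ≠ j)
    (hxi : G.Adj x (v i)) (hxj : G.Adj x (v j)) :
    ¬ (G.Adj y (v (i + 1)) ∧ G.Adj y (v (j + 1))) ∧
    ¬ (G.Adj y (v (i - 1)) ∧ G.Adj y (v (j - 1))) := by
  have : NeZero l := ⟨by omega⟩
  have no_longer : ¬ HasCycleLength G (l + 2) := fun h => by have := hmax _ h; omega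
  refine ⟨fun ⟨hyi, hyj⟩ => no_longer ?_, fun ⟨hyi, hyj⟩ => no_longer ?_⟩
  · exact hasCycleLength_add_two_of_adj_succ hinj hC hxy hx hy hij hxi hxj hyi hyj
  · have hC' : ∀ t, G.Adj (v (-t)) (v (-(t + 1))) := fun t => by
      simpa [neg_add_eq_sub] using (hC (-t - 1)).symm
    exact hasCycleLength_add_two_of_adj_succ (v := fun t => v (-t)) (hinj.comp neg_injective)
      hC' hxy (fun _ => hx _) (fun _ => hy _) (neg_injective.ne hij)
      (by simpa using hxi) (by simpa using hxj)
      (by simpa [neg_add_eq_sub] using hyi) (by simpa [neg_add_eq_sub] using hyj)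
end

section
/- Let G be a simple graph and let C = v_1 v_2 ⋯ v_l v_1 be a cycle of maximum length l in G (indices taken modulo l). Let x and y be two distinct vertices of G not lying on C, and suppose x is adjacent in G to v_i and v_j with i ≠ j (mod l). Then y is not adjacent in G to both v_{i+1} and v_{j+2}, and y is not adjacent in G to both v_{i-1} and v_{j-2}. -/
open SimpleGraph Walk

theorem HasCycleLength.of_isPath_of_adj {V : Type*} {G : SimpleGraph V} {a b x : V}
    (p : G.Walk a b) (hp : p.IsPath) (hab : a ≠ b) (hx : x ∉ p.support)
    (ha : G.Adj x a) (hb : G.Adj x b) : HasCycleLength G (p.length + 2) := by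
  refine ⟨x, cons ha (p.concat hb.symm),
    (cons_isCycle_iff _ _).2 ⟨hp.concat hx _, ?_⟩, by simp⟩
  rw [edges_concat, List.concat_eq_append, List.mem_append, List.mem_singleton, Sym2.eq_iff]
  rintro (h | ⟨rfl, -⟩ | ⟨-, rfl⟩)
  · exact hx (p.fst_mem_support_of_mem_edges h)
  · exact hx p.end_mem_support
  · exact hab rfl

theorem SimpleGraph.Walk.IsPath.append_of_disjoint {V : Type*} {G : SimpleGraph V} {u v w : V}
    {p : G.Walk u v} {q : G.Walk v w} (hp : p.IsPath) (hq : q.IsPath)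
    (h : ∀ z ∈ p.support, z ∉ q.support.tail) : (p.append q).IsPath := by
  rw [isPath_def, support_append, List.nodup_append]
  exact ⟨hp.support_nodup, hq.support_nodup.sublist (List.tail_sublist _),
    fun z hz z' hz' hzz' => h z hz (hzz' ▸ hz')⟩

theorem eq_of_apply_add_natCast_eq {α : Type*} {l : ℕ} {v : ZMod l → α}
    (hv : Function.Injective v) {a : ZMod l} {p q : ℕ} (hp : p < l) (hq : q < l)
    (h : v (a + p) = v (a + q)) : p = q := by
  have := congrArg ZMod.val (add_left_cancel (hv h))
  rwa [ZMod.val_cast_of_lt hp, ZMod.val_cast_of_lt hq] at this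

section LongestCycle

variable {V : Type*} {G : SimpleGraph V} {l : ℕ} {v : ZMod l → V}

theorem exists_isPath_along_cycle (hv : Function.Injective v)
    (hC : ∀ i, G.Adj (v i) (v (i + 1))) (a : ZMod l) {n : ℕ} (hn : n < l) {b : ZMod l}
    (hb : a + n = b) :
    ∃ p : G.Walk (v a) (v b), p.IsPath ∧ p.length = n ∧
      ∀ w ∈ p.support, ∃ k ≤ n, v (a + k) = w := by
  induction n generalizing b with
  | zero => exact ⟨nil.copy rfl (by simp_all), by simp, by simp, by simp⟩
  | succ n ih =>
    obtain ⟨p, hp, hlen, hsupp⟩ := ih (by omega) rfl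
    have hnew : v (a + n + 1) ∉ p.support := fun h => by
      obtain ⟨k, hk, hkv⟩ := hsupp _ h
      have := eq_of_apply_add_natCast_eq (p := k) (q := n + 1) hv (by omega) hn
        (by rw [hkv, Nat.cast_succ, add_assoc])
      omega
    refine ⟨(p.concat (hC _)).copy rfl (by rw [← hb, Nat.cast_succ, add_assoc]),
      by simpa using hp.concat hnew _, by simpa using hlen, ?_⟩
    simp only [support_copy, support_concat, List.mem_append, List.mem_singleton]
    rintro w (hw | rfl)
    · obtain ⟨k, hk, rfl⟩ := hsupp w hw
      exact ⟨k, by omega, rfl⟩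
    · exact ⟨n + 1, le_rfl, by rw [Nat.cast_succ, add_assoc]⟩

theorem hasCycleLength_succ_of_adj_consecutive [NeZero l] (hv : Function.Injective v)
    (hC : ∀ i, G.Adj (v i) (v (i + 1))) {x : V} (hx : ∀ k, x ≠ v k)
    (a : ZMod l) (h₀ : G.Adj x (v a)) (h₁ : G.Adj x (v (a + 1))) :
    HasCycleLength G (l + 1) := by
  have hl := NeZero.one_le (n := l)
  obtain ⟨p, hp, hlen, hsupp⟩ := exists_isPath_along_cycle hv hC (a + 1) (n := l - 1)
    (by omega) (b := a) (by rw [Nat.cast_sub hl, ZMod.natCast_self]; ring)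
  have hxp : x ∉ p.support := fun h => by
    obtain ⟨k, -, hk⟩ := hsupp x h
    exact hx _ hk.symm
  have := HasCycleLength.of_isPath_of_adj p hp (hC a).ne.symm hxp h₁ h₀
  rwa [hlen, show l - 1 + 2 = l + 1 by omega] at this

/-- The path `v (a + m), …, v a, y, v (a + m + 2), …, v (a - 1)`, which skips only
`v (a + m + 1)`. -/
theorem exists_isPath_detour (hv : Function.Injective v) (hC : ∀ i, G.Adj (v i) (v (i + 1)))
    {y : V} (hy : ∀ k, y ≠ v k) (a : ZMod l) {m : ℕ} (hm : m + 3 ≤ l)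
    (hya : G.Adj y (v a)) (hym : G.Adj y (v (a + m + 2))) :
    ∃ P : G.Walk (v (a + m)) (v (a - 1)), P.IsPath ∧ P.length = l - 1 ∧
      ∀ w ∈ P.support, w = y ∨ ∃ k, v k = w := by
  obtain ⟨R, hR, hRlen, hRsupp⟩ := exists_isPath_along_cycle hv hC a (n := m) (by omega) rfl
  obtain ⟨T, hT, hTlen, hTsupp⟩ := exists_isPath_along_cycle hv hC (a + m + 2)
    (n := l - 3 - m) (by omega) (b := a - 1)
    (by rw [Nat.sub_sub, Nat.cast_sub (by omega), ZMod.natCast_self]; push_cast; ring)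
  have hRT : ∀ w ∈ R.support, w ∉ T.support := by
    rintro _ hw hw'
    obtain ⟨k, hk, rfl⟩ := hRsupp _ hw
    obtain ⟨k', hk', hkk'⟩ := hTsupp _ hw'
    have := eq_of_apply_add_natCast_eq hv (p := m + 2 + k') (q := k) (by omega) (by omega)
      (by rw [← hkk']; push_cast; ring_nf)
    omega
  have hyR : y ∉ R.support := fun h => by
    obtain ⟨k, -, hk⟩ := hRsupp y h
    exact hy _ hk.symm
  have hyT : y ∉ T.support := fun h => by
    obtain ⟨k, -, hk⟩ := hTsupp y h
    exact hy _ hk.symm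
  refine ⟨R.reverse.append (cons hya.symm (cons hym T)), ?_, ?_, ?_⟩
  · refine hR.reverse.append_of_disjoint ((hT.cons hyT).cons ?_) ?_
    · simp only [support_cons, List.mem_cons, not_or]
      exact ⟨(hy a).symm, hRT _ R.start_mem_support⟩
    · simp only [support_reverse, List.mem_reverse, support_cons, List.tail_cons, List.mem_cons]
      rintro z hz (rfl | hz')
      · exact hyR hz
      · exact hRT z hz hz'
  · simp only [length_append, length_reverse, length_cons, hRlen, hTlen]
    omega
  · simp only [mem_support_append_iff, support_reverse, List.mem_reverse, support_cons,
      List.mem_cons]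
    rintro w (hw | hw | hw | hw)
    · obtain ⟨k, -, hk⟩ := hRsupp w hw
      exact .inr ⟨_, hk⟩
    · exact .inr ⟨a, hw.symm⟩
    · exact .inl hw
    · obtain ⟨k, -, hk⟩ := hTsupp w hw
      exact .inr ⟨_, hk⟩

theorem hasCycleLength_succ_of_adj_crossing (hv : Function.Injective v)
    (hC : ∀ i, G.Adj (v i) (v (i + 1))) {x y : V} (hxy : x ≠ y) (hx : ∀ k, x ≠ v k)
    (hy : ∀ k, y ≠ v k) (a : ZMod l) {m : ℕ} (hm : m + 3 ≤ l)
    (hxa : G.Adj x (v (a - 1))) (hxm : G.Adj x (v (a + m)))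
    (hya : G.Adj y (v a)) (hym : G.Adj y (v (a + m + 2))) :
    HasCycleLength G (l + 1) := by
  obtain ⟨P, hP, hlen, hsupp⟩ := exists_isPath_detour hv hC hy a hm hya hym
  have hxP : x ∉ P.support := fun h => by
    rcases hsupp x h with hxy' | ⟨k, hk⟩
    · exact hxy hxy'
    · exact hx k hk.symm
  have hend : v (a + m) ≠ v (a - 1) := fun h => by
    have := hP.nil_iff_eq.2 h
    rw [← length_eq_zero_iff, hlen] at this
    omega
  have := HasCycleLength.of_isPath_of_adj P hP hend hxP hxm hxa
  rwa [hlen, show l - 1 + 2 = l + 1 by omega] at this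

theorem hasCycleLength_succ_of_adj_succ_of_adj_add_two [NeZero l] (hv : Function.Injective v)
    (hC : ∀ i, G.Adj (v i) (v (i + 1))) {x y : V} (hxy : x ≠ y) (hx : ∀ k, x ≠ v k)
    (hy : ∀ k, y ≠ v k) {i j : ZMod l} (hij : i ≠ j) (hxi : G.Adj x (v i))
    (hxj : G.Adj x (v j)) (hyi : G.Adj y (v (i + 1))) (hyj : G.Adj y (v (j + 2))) :
    HasCycleLength G (l + 1) := by
  obtain ⟨m, hm, rfl⟩ : ∃ m < l, j = i + 1 + m :=
    ⟨(j - (i + 1)).val, ZMod.val_lt _, by rw [ZMod.natCast_zmod_val]; ring⟩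
  have hcases : m + 1 = l ∨ m + 2 = l ∨ m + 3 ≤ l := by omega
  rcases hcases with h | h | hm3
  · have : (m : ZMod l) + 1 = 0 := by rw [← ZMod.natCast_self, ← h]; push_cast; rfl
    exact (hij (by linear_combination -this)).elim
  · have : (m : ZMod l) + 2 = 0 := by rw [← ZMod.natCast_self, ← h]; push_cast; rfl
    refine hasCycleLength_succ_of_adj_consecutive hv hC hx _ hxj ?_
    rwa [show i + 1 + (m : ZMod l) + 1 = i by linear_combination this]
  · exact hasCycleLength_succ_of_adj_crossing hv hC hxy hx hy (i + 1) hm3 (by simpa using hxi)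
      hxj hyi hyj

end LongestCycle

/-- If `C = v_1 v_2 ⋯ v_l v_1` is a cycle of maximum length in `G`, `x, y` are
distinct vertices off `C`, and `x` is adjacent to `v_i` and `v_j` with `i ≠ j`,
then `y` is not adjacent to both `v_{i+1}` and `v_{j+2}`, nor to both `v_{i-1}`
and `v_{j-2}`. -/
theorem doubly_shifted_neighbors_off_longest_cycle {V : Type*} (G : SimpleGraph V)
    (l : ℕ) (hl : 3 ≤ l) (v : ZMod l → V) (hinj : Function.Injective v)
    (hC : ∀ i : ZMod l, G.Adj (v i) (v (i + 1)))
    (hmax : ∀ k : ℕ, HasCycleLength G k → k ≤ l)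
    (x y : V) (hxy : x ≠ y)
    (hx : ∀ i : ZMod l, x ≠ v i) (hy : ∀ i : ZMod l, y ≠ v i)
    (i j : ZMod l) (hij : i ≠ j)
    (hxi : G.Adj x (v i)) (hxj : G.Adj x (v j)) :
    ¬ (G.Adj y (v (i + 1)) ∧ G.Adj y (v (j + 2))) ∧
    ¬ (G.Adj y (v (i - 1)) ∧ G.Adj y (v (j - 2))) := by
  have : NeZero l := ⟨by omega⟩
  have hshort : ¬ HasCycleLength G (l + 1) := fun h => by have := hmax _ h; omega
  refine ⟨fun ⟨hyi, hyj⟩ => hshort (hasCycleLength_succ_of_adj_succ_of_adj_add_two hinj hC hxy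
    hx hy hij hxi hxj hyi hyj), fun ⟨hyi, hyj⟩ => hshort ?_⟩
  refine hasCycleLength_succ_of_adj_succ_of_adj_add_two (v := v ∘ Neg.neg)
    (hinj.comp neg_injective)
    (fun k => show G.Adj (v (-k)) (v (-(k + 1))) by convert (hC (-(k + 1))).symm using 2; ring)
    hxy (fun k => hx _) (fun k => hy _) (i := -i) (j := -j) (neg_injective.ne hij)
    (by simpa using hxi) (by simpa using hxj) ?_ ?_
  · rwa [Function.comp_apply, show -(-i + 1) = i - 1 by ring]
  · rwa [Function.comp_apply, show -(-j + 2) = j - 2 by ring]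
end

section
/- Let m ≥ 3 be an integer and let n ≥ m+2 be an integer such that n is not of the form q(m+1)-2, q(m+1)-1, or q(m+1) for any integer q ≥ 2. Then there exists a simple graph G on n+m+1 vertices such that G contains no subgraph isomorphic to K_{2,n} and the complement of G contains no cycle of length 2m; in particular R(K_{2,n}, C_{2m}) > n+m+1. -/
open Finset SimpleGraph

theorem exists_eq_succ_mul_add_of_ne {m n : ℕ} (hn : m + 2 ≤ n)
    (hexc : ∀ q : ℕ, 2 ≤ q →
      n ≠ q * (m + 1) - 2 ∧ n ≠ q * (m + 1) - 1 ∧ n ≠ q * (m + 1)) :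
    ∃ K t : ℕ, t + 3 ≤ m ∧ n + m = (K + 1) * (m + 1) + t := by
  have hm : 0 < m + 1 := m.add_one_pos
  have hdiv := Nat.div_add_mod' (n + m) (m + 1)
  have hmod := Nat.mod_lt (n + m) hm
  have hq : 2 ≤ (n + m) / (m + 1) := (Nat.le_div_iff_mul_le hm).mpr (by omega)
  have hne := hexc _ hq
  generalize (n + m) / (m + 1) = q at *
  generalize (n + m) % (m + 1) = t at *
  obtain ⟨K, rfl⟩ : ∃ K, q = K + 1 := ⟨q - 1, by omega⟩
  exact ⟨K, t, by omega, hdiv.symm⟩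

theorem card_filter_min_div_eq {s K t i : ℕ} (hs : 0 < s) (hi : i ≤ K) :
    #{x ∈ range ((K + 1) * s + t) | min (x / s) K = i} = s + if i = K then t else 0 := by
  suffices {x ∈ range ((K + 1) * s + t) | min (x / s) K = i} =
      Ico (i * s) (i * s + s + if i = K then t else 0) by
    rw [this, Nat.card_Ico]; omega
  ext x
  have hlo : i ≤ x / s ↔ i * s ≤ x := Nat.le_div_iff_mul_le hs
  have hhi : x / s < i + 1 ↔ x < (i + 1) * s := Nat.div_lt_iff_lt_mul hs
  have hiK : i * s ≤ K * s := Nat.mul_le_mul_right s hi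
  simp only [mem_filter, mem_range, mem_Ico, add_mul, one_mul] at hhi ⊢
  split_ifs with h
  · subst h; omega
  · omega

def blockColoring (s K : ℕ) {L : ℕ} : Fin (L + 1) → Option ℕ :=
  Fin.cases none fun x => some (min (x / s) K)

section blockColoring

variable {s K L : ℕ}

@[simp]
theorem blockColoring_zero : blockColoring s K (0 : Fin (L + 1)) = none := rfl

@[simp]
theorem blockColoring_succ (x : Fin L) : blockColoring s K x.succ = some (min (x / s) K) := rfl

theorem blockColoring_eq_none_iff {v : Fin (L + 1)} : blockColoring s K v = none ↔ v = 0 := by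
  cases v using Fin.cases <;> simp [Fin.succ_ne_zero]

theorem card_filter_blockColoring_eq_some (i : ℕ) :
    #{v : Fin (L + 1) | blockColoring s K v = some i} = #{x ∈ range L | min (x / s) K = i} := by
  rw [Fin.card_filter_univ_succ]
  simp only [blockColoring_zero, reduceCtorEq, if_false, blockColoring_succ, Option.some.injEq,
    card_filter]
  exact Fin.sum_univ_eq_sum_range (fun x => if min (x / s) K = i then 1 else 0) L

theorem card_filter_blockColoring_mem_Icc {t : ℕ} (hs : 0 < s) (hL : L = (K + 1) * s + t)
    {u : Fin (L + 1)} (hu : blockColoring s K u ≠ none) :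
    #{v : Fin (L + 1) | blockColoring s K v = blockColoring s K u} ∈ Set.Icc s (s + t) := by
  subst hL
  cases u using Fin.cases with
  | zero => exact absurd blockColoring_zero hu
  | succ x =>
    rw [blockColoring_succ, card_filter_blockColoring_eq_some,
      card_filter_min_div_eq hs (min_le_right _ _)]
    rw [Set.mem_Icc]
    split_ifs <;> omega

end blockColoring

namespace SimpleGraph

variable {V : Type*} {G : SimpleGraph V}

theorem not_contains_completeBipartiteGraph_of_degree_lt [Fintype V] [DecidableRel G.Adj]
    {α β : Type*} [Nonempty α] [Fintype β] (h : ∀ v, G.degree v < Fintype.card β) :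
    ¬ Contains G (completeBipartiteGraph α β) := by
  rintro ⟨f, hf⟩
  obtain ⟨a⟩ := ‹Nonempty α›
  refine (h (f (.inl a))).not_ge ?_
  rw [← card_neighborFinset_eq_degree, ← card_univ]
  refine card_le_card_of_injOn (fun b => f (.inr b)) (fun b _ => ?_) fun b _ b' _ hb => ?_
  · simpa using f.map_adj (by simp : (completeBipartiteGraph α β).Adj (.inl a) (.inr b))
  · exact Sum.inr_injective (hf hb)

theorem Walk.apply_eq_of_mem_support {α : Type*} {f : V → α} {P : V → Prop}
    (hf : ∀ u v, G.Adj u v → P u → P v → f u = f v) {a b : V} (p : G.Walk a b)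
    (hP : ∀ v ∈ p.support, P v) : ∀ v ∈ p.support, f v = f a := by
  induction p with
  | nil => simp
  | cons h p ih =>
    simp only [support_cons, List.mem_cons, forall_eq_or_imp] at hP ⊢
    have hstep := hf _ _ h hP.1 (hP.2 _ p.start_mem_support)
    exact ⟨trivial, fun v hv => (ih hP.2 v hv).trans hstep.symm⟩

theorem Walk.IsPath.length_lt_card_filter [Fintype V] {α : Type*} [DecidableEq α] {f : V → α}
    {P : V → Prop} (hf : ∀ u v, G.Adj u v → P u → P v → f u = f v) {a b : V}
    {p : G.Walk a b} (hp : p.IsPath) (hP : ∀ v ∈ p.support, P v) :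
    p.length < #{v | f v = f a} := by
  classical
  rw [Nat.lt_iff_add_one_le, ← p.length_support, ← List.toFinset_card_of_nodup hp.support_nodup]
  refine card_le_card fun v hv => ?_
  simpa using p.apply_eq_of_mem_support hf hP v (List.mem_toFinset.mp hv)

theorem Walk.IsPath.exists_isPath_tail {x w : V} {q : G.Walk x w} (hq : q.IsPath) (hxw : x ≠ w) :
    ∃ (a : V) (p : G.Walk a w), p.IsPath ∧ x ∉ p.support ∧ q.length = p.length + 1 := by
  cases q with
  | nil => exact absurd rfl hxw
  | cons h p =>
    obtain ⟨hp, hxp⟩ := (cons_isPath_iff h p).mp hq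
    exact ⟨_, p, hp, hxp, rfl⟩

theorem Walk.IsCycle.exists_isPath_avoiding {u : V} {C : G.Walk u u} (hC : C.IsCycle) (x : V) :
    ∃ (a b : V) (p : G.Walk a b), p.IsPath ∧ x ∉ p.support ∧ C.length ≤ p.length + 2 := by
  classical
  by_cases hx : x ∈ C.support
  · have hC' := hC.rotate hx
    have hlen := C.length_rotate x hx
    generalize C.rotate x hx = C' at hC' hlen
    cases C' with
    | nil => exact absurd rfl hC'.ne_nil
    | cons h p =>
      obtain ⟨a, q, hq, hxq, hql⟩ :=
        ((cons_isCycle_iff p h).mp hC').1.reverse.exists_isPath_tail h.ne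
      rw [length_cons] at hlen
      rw [length_reverse] at hql
      exact ⟨a, _, q, hq, hxq, by omega⟩
  · cases C with
    | nil => exact absurd rfl hC.ne_nil
    | cons h p =>
      refine ⟨_, _, p, ((cons_isCycle_iff p h).mp hC).1, fun hxp => hx ?_, by simp⟩
      exact List.mem_cons_of_mem _ hxp

variable {ι : Type*}

def partialCompleteMultipartite (c : V → Option ι) : SimpleGraph V where
  Adj u v := c u ≠ none ∧ c v ≠ none ∧ c u ≠ c v

variable {c : V → Option ι}

@[simp]
theorem partialCompleteMultipartite_adj {u v : V} :
    (partialCompleteMultipartite c).Adj u v ↔ c u ≠ none ∧ c v ≠ none ∧ c u ≠ c v :=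
  Iff.rfl

theorem partialCompleteMultipartite_compl_adj {u v : V}
    (h : (partialCompleteMultipartite c)ᶜ.Adj u v) (hu : c u ≠ none) (hv : c v ≠ none) :
    c u = c v := by
  by_contra huv
  exact h.2 ⟨hu, hv, huv⟩

variable [Fintype V] [DecidableEq ι]

instance : DecidableRel (partialCompleteMultipartite c).Adj :=
  fun u v => inferInstanceAs (Decidable (c u ≠ none ∧ c v ≠ none ∧ c u ≠ c v))

theorem partialCompleteMultipartite_degree_eq_zero {u : V} (hu : c u = none) :
    (partialCompleteMultipartite c).degree u = 0 := by
  rw [← card_neighborFinset_eq_degree, card_eq_zero, eq_empty_iff_forall_notMem]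
  simp [hu]

theorem partialCompleteMultipartite_degree_add_card_lt {u h : V} (hu : c u ≠ none)
    (hh : c h = none) :
    (partialCompleteMultipartite c).degree u + #{v | c v = c u} < Fintype.card V := by
  classical
  rw [← card_neighborFinset_eq_degree, ← card_union_of_disjoint, ← card_univ]
  · refine card_lt_card ⟨subset_univ _, fun hsub => ?_⟩
    have := hsub (mem_univ h)
    simp [hh, hu, eq_comm] at this
  · refine Finset.disjoint_left.mpr fun v hv hv' => ?_
    simp only [mem_neighborFinset, partialCompleteMultipartite_adj, mem_filter] at hv hv'
    exact hv.2.2 hv'.2.symm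

theorem partialCompleteMultipartite_not_hasCycleLength_compl {k : ℕ} {hub : V}
    (hhub : ∀ v, c v = none → v = hub)
    (hsize : ∀ v, c v ≠ none → #{w | c w = c v} + 2 ≤ k) :
    ¬ HasCycleLength (partialCompleteMultipartite c)ᶜ k := by
  rintro ⟨v, C, hC, rfl⟩
  obtain ⟨a, b, p, hp, hhub_p, hlen⟩ := hC.exists_isPath_avoiding hub
  have hcolored : ∀ w ∈ p.support, c w ≠ none := fun w hw hw' => hhub_p (hhub w hw' ▸ hw)
  have := hp.length_lt_card_filter (fun _ _ h => partialCompleteMultipartite_compl_adj h) hcolored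
  have := hsize a (hcolored a p.start_mem_support)
  omega

end SimpleGraph

theorem ramsey_badness_generic_general (m n : ℕ) (hn : m + 2 ≤ n)
    (hexc : ∀ q : ℕ, 2 ≤ q →
      n ≠ q * (m + 1) - 2 ∧ n ≠ q * (m + 1) - 1 ∧ n ≠ q * (m + 1)) :
    ∃ G : SimpleGraph (Fin (n + m + 1)),
      ¬ Contains G (completeBipartiteGraph (Fin 2) (Fin n)) ∧
      ¬ HasCycleLength Gᶜ (2 * m) := by
  obtain ⟨K, t, ht, hL⟩ := exists_eq_succ_mul_add_of_ne hn hexc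
  have hblock {u : Fin (n + m + 1)} (hu : blockColoring (m + 1) K u ≠ none) :=
    card_filter_blockColoring_mem_Icc m.add_one_pos hL hu
  refine ⟨partialCompleteMultipartite (blockColoring (m + 1) K), ?_, ?_⟩
  · refine not_contains_completeBipartiteGraph_of_degree_lt fun u => ?_
    rw [Fintype.card_fin]
    by_cases hu : blockColoring (m + 1) K u = none
    · rw [partialCompleteMultipartite_degree_eq_zero hu]
      omega
    · have hdeg := partialCompleteMultipartite_degree_add_card_lt hu blockColoring_zero
      rw [Fintype.card_fin] at hdeg
      have := (hblock hu).1
      omega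
  · refine partialCompleteMultipartite_not_hasCycleLength_compl
      (fun v => blockColoring_eq_none_iff.mp) fun v hv => ?_
    have := (hblock hv).2
    omega

/-- For `m ≥ 3` and `n ≥ m + 2` not of the form `q(m+1) - 2`, `q(m+1) - 1` or
`q(m+1)` for any `q ≥ 2`, there is a `K_{2,n}`-free graph on `n + m + 1`
vertices whose complement has no cycle of length `2m`; in particular
`R(K_{2,n}, C_{2m}) > n + m + 1`. -/
theorem ramsey_badness_generic (m n : ℕ) (hm : 3 ≤ m) (hn : m + 2 ≤ n)
    (hexc : ∀ q : ℕ, 2 ≤ q →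
      n ≠ q * (m + 1) - 2 ∧ n ≠ q * (m + 1) - 1 ∧ n ≠ q * (m + 1)) :
    ∃ G : SimpleGraph (Fin (n + m + 1)),
      ¬ Contains G (completeBipartiteGraph (Fin 2) (Fin n)) ∧
      ¬ HasCycleLength Gᶜ (2 * m) :=
  ramsey_badness_generic_general m n hn hexc
end

section
/- Let m ≥ 6, q ≥ 2, and t ∈ {0,1,2} be integers, and set n = q(m+1) - t. Then there exists a simple graph G on n+m+1 vertices such that G contains no subgraph isomorphic to K_{2,n} and the complement of G contains no cycle of length 2m; in particular R(K_{2,n}, C_{2m}) > n+m+1. -/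
open Finset

theorem Nat.exists_ge_mul_le_le_mul {a b k N : ℕ} (ha : 0 < a) (hab : a ≤ b) (hk : k * a ≤ N)
    (hkab : (k + 1) * a ≤ k * b + 1) : ∃ r, k ≤ r ∧ r * a ≤ N ∧ N ≤ r * b := by
  have hkr : k ≤ N / a := (Nat.le_div_iff_mul_le ha).2 hk
  refine ⟨N / a, hkr, Nat.div_mul_le_self N a, ?_⟩
  have hN : N < N / a * a + a := Nat.lt_div_mul_add ha
  nlinarith

theorem exists_num_parts (m q t n : ℕ) (hm : 6 ≤ m) (hq : 2 ≤ q) (ht : t ≤ 2)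
    (hn : n = q * (m + 1) - t) :
    ∃ r, 0 < r ∧ r * (m + 2) ≤ n + m + 1 ∧ n + m + 1 ≤ r * (2 * m - 1) := by
  obtain rfl | hq := hq.eq_or_lt
  · exact ⟨2, by omega, by omega, by omega⟩
  · have : 3 * (m + 1) ≤ q * (m + 1) := Nat.mul_le_mul_right _ hq
    obtain ⟨r, hr, hr'⟩ :=
      Nat.exists_ge_mul_le_le_mul (a := m + 2) (b := 2 * m - 1) (k := 3) (N := n + m + 1)
        (by omega) (by omega) (by omega) (by omega)
    exact ⟨r, by omega, hr'⟩

theorem Fin.card_filter_val (N : ℕ) (p : ℕ → Prop) [DecidablePred p] :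
    #{x : Fin N | p x} = #{x ∈ range N | p x} := by
  rw [← card_map Fin.valEmbedding, ← Nat.Iio_eq_range, ← Fin.map_valEmbedding_univ, filter_map]
  rfl

theorem Fin.card_filter_val_mod_eq {N r i : ℕ} (hr : 0 < r) (hi : i < r) :
    #{x : Fin N | (x : ℕ) % r = i} = N / r + if i < N % r then 1 else 0 := by
  rw [Fin.card_filter_val N (· % r = i), ← Nat.mod_eq_of_lt hi, ← Nat.count_modEq_card N hr,
    Nat.count_eq_card_filter_range]
  rfl

theorem Fin.le_card_filter_val_mod_eq {N r i k : ℕ} (hi : i < r) (hk : r * k ≤ N) :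
    k ≤ #{x : Fin N | (x : ℕ) % r = i} := by
  have hr : 0 < r := by omega
  rw [Fin.card_filter_val_mod_eq hr hi]
  have : k ≤ N / r := (Nat.le_div_iff_mul_le hr).2 (by linarith)
  omega

theorem Fin.card_filter_val_mod_eq_le {N r i k : ℕ} (hr : 0 < r) (hk : N ≤ r * k) :
    #{x : Fin N | (x : ℕ) % r = i} ≤ k := by
  by_cases hi : i < r
  · rw [Fin.card_filter_val_mod_eq hr hi]
    have hN := Nat.div_add_mod N r
    split_ifs with h
    · have : r * (N / r) < r * k := by omega
      have := Nat.lt_of_mul_lt_mul_left this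
      omega
    · simpa using Nat.div_le_of_le_mul hk
  · convert Nat.zero_le k
    exact card_eq_zero.2 (filter_false_of_mem fun x _ => by have := Nat.mod_lt x hr; omega)

namespace SimpleGraph

variable {V ι : Type*} {G : SimpleGraph V}

theorem Walk.apply_eq_of_mem_support_s11 {f : V → ι} (hf : ∀ ⦃x y⦄, G.Adj x y → f x = f y)
    {u v : V} (w : G.Walk u v) {x : V} (hx : x ∈ w.support) : f x = f u := by
  induction w with
  | nil => rw [List.eq_of_mem_singleton hx]
  | cons h p ih =>
    rcases List.mem_cons.1 hx with rfl | hx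
    · rfl
    · exact (ih hx).trans (hf h).symm

theorem Walk.IsCycle.length_le_card [DecidableEq V] {u : V} {c : G.Walk u u} (hc : c.IsCycle)
    {s : Finset V} (hs : ∀ x ∈ c.support, x ∈ s) : c.length ≤ #s :=
  calc c.length = c.support.tail.toFinset.card := by
        rw [List.toFinset_card_of_nodup hc.support_nodup, List.length_tail, length_support]; rfl
    _ ≤ #s := card_le_card fun x hx => hs x (List.mem_of_mem_tail (List.mem_toFinset.1 hx))

theorem not_hasCycleLength_of_card_fiber_lt [Fintype V] [DecidableEq ι] (f : V → ι)
    (hf : ∀ ⦃x y⦄, G.Adj x y → f x = f y) {k : ℕ} (hk : ∀ x, #{y | f y = f x} < k) :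
    ¬HasCycleLength G k := by
  classical
  rintro ⟨u, c, hc, rfl⟩
  have := hc.length_le_card (s := {y | f y = f u}) fun x hx => by
    simpa using c.apply_eq_of_mem_support_s11 hf hx
  exact (hk u).not_ge this

theorem not_contains_completeBipartiteGraph_of_lt_card_fiber [Fintype V] [DecidableEq ι]
    {α : Type*} [Nonempty α] (f : V → ι) (hf : ∀ ⦃x y⦄, G.Adj x y → f x ≠ f y) {n : ℕ}
    (hn : ∀ x, Fintype.card V < n + #{y | f y = f x}) :
    ¬Contains G (completeBipartiteGraph α (Fin n)) := by
  rintro ⟨φ, hφ⟩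
  obtain ⟨a⟩ := ‹Nonempty α›
  have hout : n ≤ #{y | ¬f y = f (φ (.inl a))} :=
    calc n = #(univ : Finset (Fin n)) := by simp
      _ ≤ _ := card_le_card_of_injOn (fun j => φ (.inr j))
          (fun j _ => by simpa using (hf (φ.map_adj (by simp))).symm)
          (hφ.comp Sum.inr_injective).injOn
  have := card_filter_add_card_filter_not (s := univ) (fun y => f y = f (φ (.inl a)))
  have := hn (φ (.inl a))
  simp only [card_univ] at *
  omega

end SimpleGraph

/-- For `m ≥ 6`, `q ≥ 2`, `t ∈ {0, 1, 2}` and `n = q(m+1) - t`, there is a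
`K_{2,n}`-free graph on `n + m + 1` vertices whose complement has no cycle of
length `2m`; in particular `R(K_{2,n}, C_{2m}) > n + m + 1`. -/
theorem ramsey_badness_exceptional (m q t n : ℕ) (hm : 6 ≤ m) (hq : 2 ≤ q)
    (ht : t ≤ 2) (hn : n = q * (m + 1) - t) :
    ∃ G : SimpleGraph (Fin (n + m + 1)),
      ¬ Contains G (completeBipartiteGraph (Fin 2) (Fin n)) ∧
      ¬ HasCycleLength Gᶜ (2 * m) := by
  obtain ⟨r, hr, hlo, hhi⟩ := exists_num_parts m q t n hm hq ht hn
  let part : Fin (n + m + 1) → ℕ := fun x => x % r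
  refine ⟨(⊤ : SimpleGraph ℕ).comap part, ?_, ?_⟩
  · refine SimpleGraph.not_contains_completeBipartiteGraph_of_lt_card_fiber part
      (fun x y h => h) fun x => ?_
    have := Fin.le_card_filter_val_mod_eq (Nat.mod_lt x hr) hlo
    simp only [Fintype.card_fin, part]
    omega
  · refine SimpleGraph.not_hasCycleLength_of_card_fiber_lt part
      (fun x y h => not_not.1 ((SimpleGraph.compl_adj _ _ _).1 h).2) fun x => ?_
    have := Fin.card_filter_val_mod_eq_le (i := part x) hr hhi
    simp only [part] at this ⊢
    omega
end

section
/- Let m ≥ 3, p ≥ 1, and t be integers with p+1 ≤ t ≤ m+p-2. Let H be the graph on (p+1)m+t+1 vertices obtained as the join of a single vertex with the disjoint union of one complete graph K_{m+t-p} and p copies of the complete graph K_{m+1}. Then H contains no cycle of length 2m, and the complement of H contains no subgraph isomorphic to K_{2, pm+t}. -/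
/-- The join of two graphs: their disjoint union together with all edges
between the two vertex sets. -/
def graphJoin {α β : Type*} (G : SimpleGraph α) (H : SimpleGraph β) :
    SimpleGraph (α ⊕ β) where
  Adj u v :=
    match u, v with
    | Sum.inl a, Sum.inl b => G.Adj a b
    | Sum.inr a, Sum.inr b => H.Adj a b
    | _, _ => True
  symm := ⟨by
    rintro (a | a) (b | b) h
    · exact G.adj_symm h
    · trivial
    · trivial
    · exact H.adj_symm h⟩
  loopless := ⟨by
    rintro (a | a) h
    · exact G.loopless.irrefl a h
    · exact H.loopless.irrefl a h⟩

/-- The disjoint union of `p` copies of the complete graph `K_k`. -/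
def cliqueCopies (p k : ℕ) : SimpleGraph (Fin p × Fin k) where
  Adj a b := a.1 = b.1 ∧ a ≠ b
  symm := ⟨fun _ _ h => ⟨h.1.symm, h.2.symm⟩⟩
  loopless := ⟨fun _ h => h.2 rfl⟩

/-!
In `K₁ ∨ G`, a cycle passes through the apex at most once, so deleting the apex leaves a path
inside a single component of `G`; if the components have at most `n` vertices, every cycle has
length at most `n + 1`. Here the components are the cliques `K_{m+t-p}` and `K_{m+1}`, of at most
`2m - 2` vertices each, so there is no `C_{2m}`.

In the complement the apex is isolated, and a vertex of a clique `C` is adjacent to exactly the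
vertices outside `C` other than the apex, so its degree is `pm + m + t - |C| < pm + t` because
every clique has at least `m + 1` vertices. A copy of `K_{2, pm+t}` needs a vertex of degree
`pm + t`.
-/

open Finset SimpleGraph

section GraphJoin

variable {α β : Type*} {A : SimpleGraph α} {B : SimpleGraph β}

@[simp] theorem graphJoin_adj_inr_inr {b b' : β} :
    (graphJoin A B).Adj (.inr b) (.inr b') ↔ B.Adj b b' := Iff.rfl

@[simp] theorem graphJoin_adj_inl_inr {a : α} {b : β} : (graphJoin A B).Adj (.inl a) (.inr b) :=
  trivial

@[simp] theorem graphJoin_adj_inr_inl {a : α} {b : β} : (graphJoin A B).Adj (.inr b) (.inl a) :=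
  trivial

end GraphJoin

section ConeOverGraph

variable {V ι : Type*} {G : SimpleGraph V} {ℓ : V → ι}

theorem exists_inr_of_mem_support_graphJoin (hG : ∀ a b, G.Adj a b → ℓ a = ℓ b)
    {u v : Fin 1 ⊕ V} (w : (graphJoin ⊤ G).Walk u v) (hw : Sum.inl 0 ∉ w.support) :
    ∀ x ∈ w.support, ∀ a, u = Sum.inr a → ∃ b, x = Sum.inr b ∧ ℓ b = ℓ a := by
  induction w with
  | nil =>
    intro x hx a hu
    exact ⟨a, by simpa [hu] using hx, rfl⟩
  | @cons u u' v h p ih =>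
    rintro x hx a rfl
    rw [Walk.support_cons, List.mem_cons] at hx hw
    obtain ⟨a', rfl⟩ : ∃ a', u' = Sum.inr a' := by
      rcases u' with i | a'
      · exact absurd (.inr (Fin.fin_one_eq_zero i ▸ p.start_mem_support)) hw
      · exact ⟨a', rfl⟩
    rcases hx with rfl | hx
    · exact ⟨a, rfl, rfl⟩
    · obtain ⟨b, rfl, hb⟩ := ih (fun h' => hw (.inr h')) x hx a' rfl
      exact ⟨b, rfl, hb.trans (hG a a' h).symm⟩

variable [Fintype V] [DecidableEq ι] {n : ℕ}

theorem SimpleGraph.Walk.IsPath.length_lt_of_inl_notMem_support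
    (hG : ∀ a b, G.Adj a b → ℓ a = ℓ b) (hn : ∀ a, #{b | ℓ b = ℓ a} ≤ n)
    {u v : Fin 1 ⊕ V} {w : (graphJoin ⊤ G).Walk u v} (hw : w.IsPath)
    (hapex : Sum.inl 0 ∉ w.support) : w.length < n := by
  classical
  obtain ⟨a, rfl⟩ : ∃ a, u = Sum.inr a := by
    rcases u with i | a
    · exact absurd (Fin.fin_one_eq_zero i ▸ w.start_mem_support) hapex
    · exact ⟨a, rfl⟩
  have hsub : w.support.toFinset ⊆ ({b | ℓ b = ℓ a} : Finset V).map .inr := by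
    intro x hx
    obtain ⟨b, rfl, hb⟩ :=
      exists_inr_of_mem_support_graphJoin hG w hapex x (List.mem_toFinset.1 hx) a rfl
    simpa using hb
  calc w.length < w.support.length := by simp
    _ = w.support.toFinset.card := (List.toFinset_card_of_nodup hw.support_nodup).symm
    _ ≤ #{b | ℓ b = ℓ a} := (card_le_card hsub).trans_eq (card_map _)
    _ ≤ n := hn a

theorem SimpleGraph.Walk.IsCycle.length_le_of_graphJoin (hG : ∀ a b, G.Adj a b → ℓ a = ℓ b)
    (hn : ∀ a, #{b | ℓ b = ℓ a} ≤ n) {u : Fin 1 ⊕ V} {c : (graphJoin ⊤ G).Walk u u}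
    (hc : c.IsCycle) : c.length ≤ n + 1 := by
  classical
  suffices key : ∀ (u : Fin 1 ⊕ V) (c : (graphJoin ⊤ G).Walk u u), c.IsCycle →
      u = Sum.inl 0 ∨ Sum.inl 0 ∉ c.support → c.length ≤ n + 1 by
    by_cases h : Sum.inl 0 ∈ c.support
    · simpa using key _ (c.rotate _ h) (hc.rotate h) (.inl rfl)
    · exact key u c hc (.inr h)
  -- once the cycle starts at the apex (or misses it), `c.dropLast.tail` is a path avoiding it
  intro u c hc hu
  have hlen := hc.three_le_length
  have hnil : ¬ c.dropLast.Nil := by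
    rw [← Walk.length_eq_zero_iff, Walk.length_dropLast]; omega
  have hpath := hc.isPath_dropLast
  have hapex : Sum.inl 0 ∉ c.dropLast.tail.support := by
    rw [Walk.support_tail_of_not_nil _ hnil]
    rcases hu with rfl | hu
    · exact (List.nodup_cons.1 (c.dropLast.cons_tail_support ▸ hpath.support_nodup)).1
    · rw [Walk.support_dropLast hc.not_nil]
      exact fun h => hu (List.dropLast_subset _ (List.mem_of_mem_tail h))
  have := hpath.tail.length_lt_of_inl_notMem_support hG hn hapex
  rw [Walk.length_tail, Walk.length_dropLast] at this
  omega

theorem degree_compl_graphJoin_le {k : ℕ}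
    (hG : ∀ a b, a ≠ b → ℓ a = ℓ b → G.Adj a b) (hk : ∀ a, k ≤ #{b | ℓ b = ℓ a})
    [DecidableRel (graphJoin (⊤ : SimpleGraph (Fin 1)) G)ᶜ.Adj] (x : Fin 1 ⊕ V) :
    (graphJoin ⊤ G)ᶜ.degree x ≤ Fintype.card V - k := by
  rcases x with i | a
  · have : (graphJoin ⊤ G)ᶜ.neighborFinset (Sum.inl i) = ∅ := by
      ext (j | b)
      · simp [Subsingleton.elim i j]
      · simp
    simp [← card_neighborFinset_eq_degree, this]
  · have hsub : (graphJoin (⊤ : SimpleGraph (Fin 1)) G)ᶜ.neighborFinset (Sum.inr a) ⊆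
        ({b | ¬ ℓ b = ℓ a} : Finset V).map .inr := by
      rintro (j | b) h
      · simp at h
      · simp only [mem_neighborFinset, compl_adj, graphJoin_adj_inr_inr] at h
        simpa using fun hb => h.2 (hG a b (fun hab => h.1 (congrArg _ hab)) hb.symm)
    have hsplit := card_filter_add_card_filter_not (s := (univ : Finset V)) (ℓ · = ℓ a)
    have := card_le_card hsub
    rw [card_map, card_neighborFinset_eq_degree] at this
    have := hk a
    rw [card_univ] at hsplit
    omega

end ConeOverGraph

theorem Contains.exists_card_le_degree {W α β : Type*} [Fintype W] [Fintype β]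
    {H : SimpleGraph W} [DecidableRel H.Adj] (h : Contains H (completeBipartiteGraph α β))
    (a : α) : ∃ v, Fintype.card β ≤ H.degree v := by
  obtain ⟨f, hf⟩ := h
  refine ⟨f (.inl a), ?_⟩
  rw [← card_neighborFinset_eq_degree, ← card_univ,
    ← card_map ⟨_, hf.comp Sum.inr_injective⟩]
  refine card_le_card fun v hv => ?_
  obtain ⟨b, -, rfl⟩ := mem_map.1 hv
  simpa using f.map_adj (show (completeBipartiteGraph α β).Adj (.inl a) (.inr b) by simp)

section CliqueCopies

variable {α κ β : Type*}

def cliqueLabel : α ⊕ κ × β → Option κ := Sum.elim (fun _ => none) (fun x => some x.1)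

@[simp] theorem cliqueLabel_inl (x : α) : cliqueLabel (.inl x : α ⊕ κ × β) = none := rfl

@[simp] theorem cliqueLabel_inr (x : κ × β) :
    cliqueLabel (.inr x : α ⊕ κ × β) = some x.1 := rfl

theorem sum_top_cliqueCopies_adj_iff {p k : ℕ} {x y : α ⊕ Fin p × Fin k} :
    ((⊤ : SimpleGraph α) ⊕g cliqueCopies p k).Adj x y ↔
      x ≠ y ∧ cliqueLabel x = cliqueLabel y := by
  rcases x with x | x <;> rcases y with y | y <;> simp [cliqueCopies, and_comm]

variable [Fintype α] [Fintype κ] [Fintype β] [DecidableEq κ]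

theorem card_cliqueLabel_fiber_inl (x : α) :
    #{y : α ⊕ κ × β | cliqueLabel y = cliqueLabel (.inl x : α ⊕ κ × β)} =
      Fintype.card α := by
  calc _ = #((univ : Finset α).map .inl) :=
        congrArg card (by ext (y | y) <;> rw [mem_filter] <;> simp)
    _ = Fintype.card α := by simp

theorem card_cliqueLabel_fiber_inr (x : κ × β) :
    #{y : α ⊕ κ × β | cliqueLabel y = cliqueLabel (.inr x : α ⊕ κ × β)} =
      Fintype.card β := by
  calc _ = #((univ : Finset β).map ((Function.Embedding.sectR x.1 β).trans .inr)) :=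
        congrArg card (by ext (y | ⟨i, y⟩) <;> rw [mem_filter] <;> simp [eq_comm])
    _ = Fintype.card β := by simp

end CliqueCopies

theorem construction_one_general (m p t : ℕ) (ht₁ : p + 1 ≤ t) (ht₂ : t ≤ m + p - 2) :
    ¬ HasCycleLength
        (graphJoin (⊤ : SimpleGraph (Fin 1))
          ((⊤ : SimpleGraph (Fin (m + t - p))) ⊕g cliqueCopies p (m + 1)))
        (2 * m) ∧
    ¬ Contains
        (graphJoin (⊤ : SimpleGraph (Fin 1))
          ((⊤ : SimpleGraph (Fin (m + t - p))) ⊕g cliqueCopies p (m + 1)))ᶜ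
        (completeBipartiteGraph (Fin 2) (Fin (p * m + t))) := by
  classical
  have hfiber : ∀ a : Fin (m + t - p) ⊕ Fin p × Fin (m + 1),
      let fiber : Finset (Fin (m + t - p) ⊕ Fin p × Fin (m + 1)) :=
        {b | cliqueLabel b = cliqueLabel a}
      m + 1 ≤ #fiber ∧ #fiber ≤ 2 * m - 2 := by
    rintro (x | x) <;> simp only [card_cliqueLabel_fiber_inl, card_cliqueLabel_fiber_inr,
      Fintype.card_fin] <;> omega
  constructor
  · rintro ⟨v, c, hc, hlen⟩
    have := hc.length_le_of_graphJoin (fun a b h => (sum_top_cliqueCopies_adj_iff.1 h).2)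
      (fun a => (hfiber a).2)
    omega
  · intro hK
    obtain ⟨v, hv⟩ := hK.exists_card_le_degree 0
    have := degree_compl_graphJoin_le
      (fun a b hab hℓ => sum_top_cliqueCopies_adj_iff.2 ⟨hab, hℓ⟩) (fun a => (hfiber a).1) v
    simp only [Fintype.card_sum, Fintype.card_prod, Fintype.card_fin] at this hv
    have : p * (m + 1) = p * m + p := by ring
    omega

/-- For `m ≥ 3`, `p ≥ 1` and `p + 1 ≤ t ≤ m + p - 2`, the join of a single
vertex with `K_{m+t-p} ∪ p · K_{m+1}` has no cycle of length `2m`, and its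
complement contains no `K_{2, pm+t}`. -/
theorem construction_one (m p t : ℕ) (hm : 3 ≤ m) (hp : 1 ≤ p)
    (ht₁ : p + 1 ≤ t) (ht₂ : t ≤ m + p - 2) :
    ¬ HasCycleLength
        (graphJoin (⊤ : SimpleGraph (Fin 1))
          ((⊤ : SimpleGraph (Fin (m + t - p))) ⊕g cliqueCopies p (m + 1)))
        (2 * m) ∧
    ¬ Contains
        (graphJoin (⊤ : SimpleGraph (Fin 1))
          ((⊤ : SimpleGraph (Fin (m + t - p))) ⊕g cliqueCopies p (m + 1)))ᶜ
        (completeBipartiteGraph (Fin 2) (Fin (p * m + t))) :=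
  construction_one_general m p t ht₁ ht₂
end
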